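/- Let φ : A → B be a dense and spectral morphism of unital complex Banach algebras. Then csr A = csr B. -/

import Mathlib

/-!
A spectral morphism reflects invertibility. With density of `φ` and openness of the units of `B`,
this makes `Lg_n(A)` exactly the preimage of the open set `Lg_n(B)` under the real-linear,
dense-range map `φⁿ`. For such a map `f` and open `U`, `f⁻¹(U)` is connected iff `U` is:
`f(f⁻¹(U))` is dense in `U`, and conversely the preimage of a ball in `U` is convex, so the
component of `f⁻¹(U)` containing it is a locally constant function of the ball's centre.
-/

open Metric Set

/-- The set of unimodular `n`-tuples: tuples `(a₁, …, aₙ)` with `A·a₁ + ⋯ + A·aₙ = A`. -/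
def Lg (A : Type*) [Ring A] (n : ℕ) : Set (Fin n → A) :=
  {a | ∃ x : Fin n → A, ∑ i, x i * a i = 1}

/-- The connected stable rank: the least `n ≥ 1` such that `Lg_m(A)` is connected
for all `m ≥ n`. -/
noncomputable def csr (A : Type*) [Ring A] [TopologicalSpace A] : ℕ∞ :=
  sInf {c : ℕ∞ | ∃ n : ℕ, c = n ∧ 1 ≤ n ∧ ∀ m : ℕ, n ≤ m → IsConnected (Lg A m)}

theorem DenseRange.isPreconnected_of_isPreconnected_preimage {X Y : Type*} [TopologicalSpace X]
    [TopologicalSpace Y] {f : X → Y} (hf : Continuous f) (hd : DenseRange f) {U : Set Y}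
    (hU : IsOpen U) (h : IsPreconnected (f ⁻¹' U)) : IsPreconnected U := by
  refine (h.image f hf.continuousOn).subset_closure (image_preimage_subset f U) ?_
  rw [image_preimage_eq_inter_range]
  exact hd.open_subset_closure_inter hU

section Linear

variable {E F : Type*} [AddCommGroup E] [Module ℝ E] [TopologicalSpace E] [ContinuousAdd E]
  [ContinuousSMul ℝ E] [SeminormedAddCommGroup F] [NormedSpace ℝ F]

theorem DenseRange.isPreconnected_preimage {f : E →ₗ[ℝ] F} (hd : DenseRange f) {U : Set F}
    (hU : IsOpen U) (h : IsPreconnected U) : IsPreconnected (f ⁻¹' U) := by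
  set X := f ⁻¹' U
  choose! ρ hρ hρU using Metric.isOpen_iff.mp hU
  choose! α hα using fun b (hb : b ∈ U) ↦
    hd.exists_mem_open isOpen_ball ⟨b, mem_ball_self (hρ b hb)⟩
  have hcomp : ∀ b ∈ U, ∀ a, f a ∈ ball b (ρ b) →
      connectedComponentIn X (α b) = connectedComponentIn X a := fun b hb a ha ↦
    connectedComponentIn_eq <| ((convex_ball b (ρ b)).linear_preimage f).isPreconnected
      |>.subset_connectedComponentIn (hα b hb) (preimage_mono (hρU b hb)) ha
  -- Overlapping balls have overlapping preimages, by density.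
  have hconst : ∀ b ∈ U, ∀ b' ∈ U,
      connectedComponentIn X (α b) = connectedComponentIn X (α b') := by
    refine fun b hb b' hb' ↦ h.induction₂
      (fun b b' ↦ connectedComponentIn X (α b) = connectedComponentIn X (α b'))
      (fun b hb ↦ ?_) (fun _ _ _ _ _ _ ↦ Eq.trans) (fun _ _ _ _ ↦ Eq.symm) hb hb'
    filter_upwards [self_mem_nhdsWithin, mem_nhdsWithin_of_mem_nhds (ball_mem_nhds b (hρ b hb))]
      with b' hb' hbb'
    obtain ⟨a, ha, ha'⟩ := hd.exists_mem_open (isOpen_ball.inter isOpen_ball)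
      ⟨b', hbb', mem_ball_self (hρ b' hb')⟩
    exact (hcomp b hb a ha).trans (hcomp b' hb' a ha').symm
  refine isPreconnected_of_forall_pair fun a ha a' ha' ↦ ⟨connectedComponentIn X a,
    connectedComponentIn_subset _ _, mem_connectedComponentIn ha, ?_,
    isPreconnected_connectedComponentIn⟩
  rw [← hcomp _ ha a (mem_ball_self (hρ _ ha)), hconst _ ha _ ha',
    hcomp _ ha' a' (mem_ball_self (hρ _ ha'))]
  exact mem_connectedComponentIn ha'

theorem DenseRange.isConnected_preimage_iff {f : E →ₗ[ℝ] F} (hf : Continuous f)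
    (hd : DenseRange f) {U : Set F} (hU : IsOpen U) :
    IsConnected (f ⁻¹' U) ↔ IsConnected U :=
  ⟨fun h ↦ ⟨h.nonempty.image f |>.mono (image_preimage_subset f U),
      hd.isPreconnected_of_isPreconnected_preimage hf hU h.isPreconnected⟩,
    fun h ↦ ⟨hd.exists_mem_open hU h.nonempty, hd.isPreconnected_preimage hU h.isPreconnected⟩⟩

end Linear

theorem mem_Lg_iff_exists_isUnit {R : Type*} [Ring R] {n : ℕ} {a : Fin n → R} :
    a ∈ Lg R n ↔ ∃ x : Fin n → R, IsUnit (∑ i, x i * a i) := by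
  refine ⟨fun ⟨x, hx⟩ ↦ ⟨x, hx ▸ isUnit_one⟩, fun ⟨x, u, hu⟩ ↦ ⟨fun i ↦ ↑u⁻¹ * x i, ?_⟩⟩
  simp only [mul_assoc, ← Finset.mul_sum, ← hu, Units.inv_mul]

theorem isOpen_Lg {R : Type*} [NormedRing R] [HasSummableGeomSeries R] (n : ℕ) :
    IsOpen (Lg R n) := by
  have : Lg R n = ⋃ x : Fin n → R, (fun a ↦ ∑ i, x i * a i) ⁻¹' {u | IsUnit u} := by
    ext a
    simp [mem_Lg_iff_exists_isUnit]
  rw [this]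
  exact isOpen_iUnion fun x ↦ Units.isOpen.preimage (by fun_prop)

theorem preimage_Lg_of_denseRange {R S : Type*} [Ring R] [NormedRing S]
    [HasSummableGeomSeries S] (f : R →+* S) [IsLocalHom f] (hd : DenseRange f) (n : ℕ) :
    (fun (a : Fin n → R) i ↦ f (a i)) ⁻¹' Lg S n = Lg R n := by
  refine Subset.antisymm (fun a ⟨y, hy⟩ ↦ ?_) fun a ⟨x, hx⟩ ↦ ⟨f ∘ x, ?_⟩
  · beta_reduce at hy
    have hO : IsOpen {z : Fin n → S | IsUnit (∑ i, z i * f (a i))} :=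
      Units.isOpen.preimage (by fun_prop)
    obtain ⟨x, hx⟩ := (DenseRange.piMap fun _ ↦ hd).exists_mem_open hO ⟨y, by simp [hy]⟩
    refine mem_Lg_iff_exists_isUnit.mpr ⟨x, (isUnit_map_iff f _).mp ?_⟩
    simpa [map_sum] using hx
  · simp only [Function.comp_apply, ← map_mul, ← map_sum, hx, map_one]

theorem AlgHom.isLocalHom_of_spectrum_eq {R A B : Type*} [CommRing R] [Ring A] [Ring B]
    [Algebra R A] [Algebra R B] (φ : A →ₐ[R] B) (h : ∀ a, spectrum R (φ a) = spectrum R a) :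
    IsLocalHom φ :=
  ⟨fun a ha ↦ by
    rw [← not_not (a := IsUnit a), ← spectrum.zero_mem_iff R, ← h, spectrum.zero_mem_iff, not_not]
    exact ha⟩

theorem csr_eq_csr_of_isConnected_Lg_iff {A B : Type*} [Ring A] [TopologicalSpace A] [Ring B]
    [TopologicalSpace B] (h : ∀ n, IsConnected (Lg A n) ↔ IsConnected (Lg B n)) :
    csr A = csr B := by
  simp only [csr, h]

theorem csr_eq_csr_of_dense_spectral_general {A B : Type*}
    [NormedRing A] [NormedAlgebra ℂ A]
    [NormedRing B] [NormedAlgebra ℂ B] [CompleteSpace B]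
    (φ : A →ₐ[ℂ] B) (hcont : Continuous φ) (hdense : DenseRange φ)
    (hspec : ∀ a : A, spectrum ℂ (φ a) = spectrum ℂ a) :
    csr A = csr B := by
  have := φ.isLocalHom_of_spectrum_eq hspec
  refine csr_eq_csr_of_isConnected_Lg_iff fun n ↦ ?_
  let Φ : (Fin n → A) →ₗ[ℝ] Fin n → B := (φ.toLinearMap.restrictScalars ℝ).compLeft (Fin n)
  have hΦ : Continuous Φ := continuous_pi fun i ↦ hcont.comp (continuous_apply i)
  rw [← preimage_Lg_of_denseRange (φ : A →+* B) hdense n]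
  exact (DenseRange.piMap fun _ ↦ hdense).isConnected_preimage_iff (f := Φ) hΦ (isOpen_Lg n)

/-- If `φ : A → B` is a dense and spectral morphism of unital complex Banach algebras,
then `csr A = csr B`. -/
theorem csr_eq_csr_of_dense_spectral {A B : Type*}
    [NormedRing A] [NormedAlgebra ℂ A] [CompleteSpace A]
    [NormedRing B] [NormedAlgebra ℂ B] [CompleteSpace B]
    (φ : A →ₐ[ℂ] B) (hcont : Continuous φ) (hdense : DenseRange φ)
    (hspec : ∀ a : A, spectrum ℂ (φ a) = spectrum ℂ a) :
    csr A = csr B :=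
  csr_eq_csr_of_dense_spectral_general φ hcont hdense hspec
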